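/- arXiv:2308.06458 — 5 statements merged into one kernel-verified Lean document; each statement's English description precedes it below -/
import Mathlib

section
/- Let $g : (0,\infty) \to \mathbb{R}$ be twice differentiable with $\int_0^\infty g'(r)^2 r^2 \, dr < \infty$, and suppose $(r^2 g'(r))' \geq 0$ for all $r > 0$. Then $\liminf_{r \to 0^+} r^2 g'(r) = 0$, and in fact $r^2 g'(r) \geq 0$ for all $r > 0$, so $g$ is nondecreasing on $(0,\infty)$. -/
/-! Since `(r² g')' ≥ 0`, the function `F r = r² g'(r)` is monotone on `(0, ∞)`. Near `0` it
cannot stay away from `0`: if `|F| ≥ c > 0` on `(0, t)`, then `g'² r² = F² / r² ≥ c² / r²` there,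
which is not integrable at `0`. A monotone function that comes arbitrarily close to `0` at `0⁺`
is nonnegative and tends to `0`; then `g' = F / r² ≥ 0`. -/

open Set Filter Topology MeasureTheory

lemma monotoneOn_Ioi_of_hasDerivAt_nonneg {f f' : ℝ → ℝ} {a : ℝ}
    (hf : ∀ x ∈ Ioi a, HasDerivAt f (f' x) x) (hf' : ∀ x ∈ Ioi a, 0 ≤ f' x) :
    MonotoneOn f (Ioi a) := by
  refine monotoneOn_of_hasDerivWithinAt_nonneg (f' := f') (convex_Ioi a)
    (fun x hx => (hf x hx).continuousAt.continuousWithinAt) ?_ ?_ <;> rw [interior_Ioi]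
  · exact fun x hx => (hf x hx).hasDerivWithinAt
  · exact hf'

lemma not_integrableOn_Ioo_zero_sq_div_sq {F : ℝ → ℝ} {c t : ℝ} (hc : 0 < c) (ht : 0 < t)
    (hF : ∀ r ∈ Ioo 0 t, c ≤ |F r|) : ¬ IntegrableOn (fun r => F r ^ 2 / r ^ 2) (Ioo 0 t) := by
  intro h
  have hrpow : IntegrableOn (fun r : ℝ => r ^ (-2 : ℝ)) (Ioo 0 t) := by
    refine (h.div_const (c ^ 2)).mono' ?_ ?_
    · exact ContinuousOn.aestronglyMeasurable
        (fun r hr => (Real.continuousAt_rpow_const r _ (Or.inl hr.1.ne')).continuousWithinAt)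
        measurableSet_Ioo
    · filter_upwards [ae_restrict_mem measurableSet_Ioo] with r hr
      have hcF : c ^ 2 ≤ F r ^ 2 := (pow_le_pow_left₀ hc.le (hF r hr) 2).trans_eq (sq_abs _)
      rw [Real.rpow_neg hr.1.le, Real.rpow_two, Real.norm_of_nonneg (by positivity)]
      calc (r ^ 2)⁻¹ = c ^ 2 / r ^ 2 / c ^ 2 := by field_simp
        _ ≤ F r ^ 2 / r ^ 2 / c ^ 2 := by gcongr
  have := (intervalIntegral.integrableOn_Ioo_rpow_iff ht).1 hrpow
  norm_num at this

lemma frequently_abs_lt_of_integrableAtFilter_sq_div_sq {F : ℝ → ℝ}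
    (hF : IntegrableAtFilter (fun r => F r ^ 2 / r ^ 2) (𝓝[>] 0)) {c : ℝ} (hc : 0 < c) :
    ∃ᶠ r in 𝓝[>] 0, |F r| < c := by
  intro hfar
  obtain ⟨s, hs, hint⟩ := hF
  obtain ⟨t, ht, hsub⟩ := mem_nhdsGT_iff_exists_Ioo_subset.1 (inter_mem hs hfar)
  exact not_integrableOn_Ioo_zero_sq_div_sq hc ht (fun r hr => not_lt.1 (hsub hr).2)
    (hint.mono_set fun r hr => (hsub hr).1)

lemma MonotoneOn.nonneg_of_frequently_abs_lt {F : ℝ → ℝ} (hmono : MonotoneOn F (Ioi 0))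
    (hsmall : ∀ c > 0, ∃ᶠ r in 𝓝[>] 0, |F r| < c) : ∀ r > 0, 0 ≤ F r := by
  intro r hr
  by_contra! hneg
  obtain ⟨s, hFs, hs⟩ := ((hsmall _ (neg_pos.2 hneg)).and_eventually (Ioo_mem_nhdsGT hr)).exists
  have := hmono hs.1 hr hs.2.le
  linarith [neg_abs_le (F s)]

lemma MonotoneOn.tendsto_zero_of_frequently_abs_lt {F : ℝ → ℝ} (hmono : MonotoneOn F (Ioi 0))
    (hsmall : ∀ c > 0, ∃ᶠ r in 𝓝[>] 0, |F r| < c) :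
    Tendsto F (𝓝[>] 0) (𝓝 0) := by
  have hnonneg := hmono.nonneg_of_frequently_abs_lt hsmall
  refine tendsto_order.2 ⟨fun a ha => ?_, fun b hb => ?_⟩
  · filter_upwards [self_mem_nhdsWithin] with r hr using ha.trans_le (hnonneg r hr)
  · obtain ⟨s, hFs, hs⟩ := ((hsmall b hb).and_eventually self_mem_nhdsWithin).exists
    filter_upwards [Ioo_mem_nhdsGT hs] with r hr
    exact (hmono hr.1 hs hr.2.le).trans_lt ((le_abs_self _).trans_lt hFs)

theorem liminf_r2g'_zero (g g' h' : ℝ → ℝ)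
    (hderiv : ∀ r ∈ Set.Ioi (0 : ℝ), HasDerivAt g (g' r) r)
    (hderiv2 : ∀ r ∈ Set.Ioi (0 : ℝ), HasDerivAt (fun s => s ^ 2 * g' s) (h' r) r)
    (hint : MeasureTheory.IntegrableOn (fun r => (g' r) ^ 2 * r ^ 2) (Set.Ioi 0))
    (hpos : ∀ r ∈ Set.Ioi (0 : ℝ), 0 ≤ h' r) :
    Filter.liminf (fun r => r ^ 2 * g' r) (nhdsWithin 0 (Set.Ioi 0)) = 0 ∧
    (∀ r > 0, 0 ≤ r ^ 2 * g' r) ∧ MonotoneOn g (Set.Ioi 0) := by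
  set F : ℝ → ℝ := fun r => r ^ 2 * g' r
  have hmono : MonotoneOn F (Ioi 0) := monotoneOn_Ioi_of_hasDerivAt_nonneg hderiv2 hpos
  have hintF : IntegrableAtFilter (fun r => F r ^ 2 / r ^ 2) (𝓝[>] 0) :=
    ⟨Ioi 0, self_mem_nhdsWithin, hint.congr_fun (fun r (hr : 0 < r) => by simp only [F]; field_simp)
      measurableSet_Ioi⟩
  have hsmall := fun c (hc : 0 < c) => frequently_abs_lt_of_integrableAtFilter_sq_div_sq hintF hc
  have hnonneg := hmono.nonneg_of_frequently_abs_lt hsmall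
  refine ⟨(hmono.tendsto_zero_of_frequently_abs_lt hsmall).liminf_eq, hnonneg, ?_⟩
  exact monotoneOn_Ioi_of_hasDerivAt_nonneg hderiv
    fun r hr => nonneg_of_mul_nonneg_right (hnonneg r hr) (pow_pos hr 2)
end

section
/- Let $e > 0$ and let $f, g : (0,\infty) \to \mathbb{R}$ be $C^2$ functions with $g(r) > 0$ and $f(r) > 0$ for all $r > 0$, satisfying $g'' + \frac{2}{r} g' = e^2 g f^2$ on $(0,\infty)$, with $r^2 g'(r) \to 0$ as $r \to 0^+$. Then $g'(r) > 0$ for all $r > 0$; in particular $g$ is strictly increasing on $(0,\infty)$. -/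
/-!
Multiplying the equation by `r ^ 2` turns it into the flux identity
`(r ^ 2 g')' = e ^ 2 r ^ 2 g f ^ 2 > 0`, so `r ^ 2 g'` is strictly increasing on `(0, ∞)`.
Since it tends to `0` at the origin, it is positive, hence so is `g'`.
-/

open Set Filter Topology

lemma strictMonoOn_of_hasDerivAt_pos {D : Set ℝ} (hconv : Convex ℝ D) (hopen : IsOpen D)
    {φ φ' : ℝ → ℝ} (hφ : ∀ x ∈ D, HasDerivAt φ (φ' x) x) (hpos : ∀ x ∈ D, 0 < φ' x) :
    StrictMonoOn φ D := by
  refine strictMonoOn_of_hasDerivWithinAt_pos (f' := φ') hconv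
    (fun x hx => (hφ x hx).continuousAt.continuousWithinAt) ?_ ?_ <;> rw [hopen.interior_eq]
  exacts [fun x hx => (hφ x hx).hasDerivWithinAt, hpos]

lemma StrictMonoOn.lt_of_tendsto_nhdsGT {α β : Type*} [LinearOrder α] [TopologicalSpace α]
    [OrderTopology α] [DenselyOrdered α] [LinearOrder β] [TopologicalSpace β]
    [OrderClosedTopology β] {φ : α → β} {a x : α} {L : β} (hφ : StrictMonoOn φ (Ioi a))
    (hlim : Tendsto φ (𝓝[>] a) (𝓝 L)) (hx : a < x) : L < φ x := by
  obtain ⟨y, hay, hyx⟩ := exists_between hx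
  have : NeBot (𝓝[>] a) := nhdsGT_neBot_of_exists_gt ⟨x, hx⟩
  have hLy : L ≤ φ y := by
    refine le_of_tendsto hlim ?_
    filter_upwards [Ioo_mem_nhdsGT hay] with z hz
    exact (hφ hz.1 hay hz.2).le
  exact hLy.trans_lt (hφ hay hx hyx)

lemma hasDerivAt_sq_mul {u : ℝ → ℝ} {u' r : ℝ} (hr : r ≠ 0) (hu : HasDerivAt u u' r) :
    HasDerivAt (fun s => s ^ 2 * u s) (r ^ 2 * (u' + 2 / r * u r)) r := by
  refine ((hasDerivAt_pow 2 r).fun_mul hu).congr_deriv ?_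
  field_simp
  ring

theorem g_strictly_increasing (e : ℝ) (he : 0 < e) (f g g' g'' : ℝ → ℝ)
    (hgpos : ∀ r > 0, 0 < g r) (hfpos : ∀ r > 0, 0 < f r)
    (hd1 : ∀ r ∈ Set.Ioi (0 : ℝ), HasDerivAt g (g' r) r)
    (hd2 : ∀ r ∈ Set.Ioi (0 : ℝ), HasDerivAt g' (g'' r) r)
    (heq : ∀ r > 0, g'' r + 2 / r * g' r = e ^ 2 * g r * (f r) ^ 2)
    (hbc : Filter.Tendsto (fun r => r ^ 2 * g' r) (nhdsWithin 0 (Set.Ioi 0)) (nhds 0)) :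
    (∀ r > 0, 0 < g' r) ∧ StrictMonoOn g (Set.Ioi 0) := by
  have hflux : ∀ r ∈ Ioi (0 : ℝ),
      HasDerivAt (fun s => s ^ 2 * g' s) (r ^ 2 * (e ^ 2 * g r * f r ^ 2)) r := fun r hr =>
    heq r hr ▸ hasDerivAt_sq_mul (ne_of_gt hr) (hd2 r hr)
  have hflux_mono : StrictMonoOn (fun s => s ^ 2 * g' s) (Ioi 0) :=
    strictMonoOn_of_hasDerivAt_pos (convex_Ioi 0) isOpen_Ioi hflux fun r (hr : 0 < r) => by
      have := hgpos r hr
      have := hfpos r hr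
      positivity
  have hg'pos : ∀ r > 0, 0 < g' r := fun r hr =>
    pos_of_mul_pos_right (hflux_mono.lt_of_tendsto_nhdsGT hbc hr) (sq_nonneg r)
  exact ⟨hg'pos, strictMonoOn_of_hasDerivAt_pos (convex_Ioi 0) isOpen_Ioi hd1 hg'pos⟩
end

section
/- Let $\sigma > 0$, $0 < \varepsilon < 1$, and let $\hat{f} : (0,\infty) \to \mathbb{R}$ be positive, $C^2$, satisfy $\hat{f}'' = q(r)\hat{f}$ where $q(r) \geq \sigma^2(1-\varepsilon)^2$ for all $r \geq r_\varepsilon$, and suppose there is a sequence $r_j \to \infty$ with $\hat{f}(r_j) \to 0$. Then there exists $C > 0$ such that $\hat{f}(r) \leq C e^{-\sigma(1-\varepsilon) r}$ for all $r \geq r_\varepsilon$. -/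
theorem exponential_decay (σ ε reps : ℝ)
    (hσ : 0 < σ) (hε1 : 0 < ε) (hε2 : ε < 1) (hreps : 0 < reps)
    (fh fd q : ℝ → ℝ)
    (hpos : ∀ r > 0, 0 < fh r)
    (hd1 : ∀ r ∈ Set.Ioi (0 : ℝ), HasDerivAt fh (fd r) r)
    (hd2 : ∀ r ∈ Set.Ioi (0 : ℝ), HasDerivAt fd (q r * fh r) r)
    (hq : ∀ r ≥ reps, q r ≥ σ ^ 2 * (1 - ε) ^ 2)
    (rj : ℕ → ℝ) (hrj : Filter.Tendsto rj Filter.atTop Filter.atTop)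
    (hlim : Filter.Tendsto (fun j => fh (rj j)) Filter.atTop (nhds 0)) :
    ∃ C > 0, ∀ r ≥ reps, fh r ≤ C * Real.exp (-σ * (1 - ε) * r) := by
  set k := σ * (1 - ε) with hk
  have hkpos : 0 < k := mul_pos hσ (by linarith)
  have hmem : ∀ r, reps ≤ r → r ∈ Set.Ioi (0:ℝ) := fun r hr => lt_of_lt_of_le hreps hr
  have hqpos : ∀ r ≥ reps, k ^ 2 ≤ q r := by
    intro r hr
    have := hq r hr
    nlinarith [sq_nonneg σ, sq_nonneg (1 - ε)]
  -- Step 1: fd ≤ 0 on [reps, ∞)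
  have hfd : ∀ r ≥ reps, fd r ≤ 0 := by
    intro r0 hr0
    by_contra h
    push_neg at h
    have hmono_fd : MonotoneOn fd (Set.Ici r0) := by
      apply monotoneOn_of_deriv_nonneg (convex_Ici r0)
      · intro x hx
        exact ((hd2 x (hmem x (le_trans hr0 hx))).continuousAt).continuousWithinAt
      · intro x hx
        rw [interior_Ici] at hx
        exact (hd2 x (hmem x (le_trans hr0 hx.le))).differentiableAt.differentiableWithinAt
      · intro x hx
        rw [interior_Ici] at hx
        have hx' : reps ≤ x := le_trans hr0 hx.le
        rw [(hd2 x (hmem x hx')).deriv]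
        have h1 := hqpos x hx'
        have h2 := hpos x (hmem x hx')
        nlinarith [sq_nonneg k]
    have hmono_fh : MonotoneOn fh (Set.Ici r0) := by
      apply monotoneOn_of_deriv_nonneg (convex_Ici r0)
      · intro x hx
        exact ((hd1 x (hmem x (le_trans hr0 hx))).continuousAt).continuousWithinAt
      · intro x hx
        rw [interior_Ici] at hx
        exact (hd1 x (hmem x (le_trans hr0 hx.le))).differentiableAt.differentiableWithinAt
      · intro x hx
        rw [interior_Ici] at hx
        rw [(hd1 x (hmem x (le_trans hr0 hx.le))).deriv]
        have := hmono_fd (Set.self_mem_Ici) (Set.mem_Ici.mpr hx.le) hx.le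
        linarith
    have hfh0 : 0 < fh r0 := hpos r0 (hmem r0 hr0)
    have hev1 : ∀ᶠ j in Filter.atTop, fh (rj j) < fh r0 :=
      hlim.eventually_lt_const hfh0
    have hev2 : ∀ᶠ j in Filter.atTop, r0 ≤ rj j := hrj.eventually_ge_atTop r0
    obtain ⟨j, hj1, hj2⟩ := (hev1.and hev2).exists
    have := hmono_fh (Set.self_mem_Ici) (Set.mem_Ici.mpr hj2) hj2
    linarith
  -- fh is nonincreasing on [reps, ∞)
  have hanti_fh : AntitoneOn fh (Set.Ici reps) := by
    apply antitoneOn_of_deriv_nonpos (convex_Ici reps)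
    · intro x hx
      exact ((hd1 x (hmem x hx)).continuousAt).continuousWithinAt
    · intro x hx
      rw [interior_Ici] at hx
      exact (hd1 x (hmem x hx.le)).differentiableAt.differentiableWithinAt
    · intro x hx
      rw [interior_Ici] at hx
      rw [(hd1 x (hmem x hx.le)).deriv]
      exact hfd x hx.le
  -- Step 2: fd + k * fh ≤ 0 on [reps, ∞)
  have hw : ∀ r ≥ reps, fd r + k * fh r ≤ 0 := by
    intro r0 hr0
    by_contra h
    push_neg at h
    set m : ℝ → ℝ := fun r => (fd r + k * fh r) * Real.exp (-k * r) with hm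
    have hm0 : 0 < m r0 := mul_pos h (Real.exp_pos _)
    have hderiv : ∀ x, reps ≤ x →
        HasDerivAt m ((q x * fh x + k * fd x) * Real.exp (-k * x)
          + (fd x + k * fh x) * (Real.exp (-k * x) * -k)) x := by
      intro x hx
      have he : HasDerivAt (fun r => Real.exp (-k * r)) (Real.exp (-k * x) * -k) x := by
        simpa using (((hasDerivAt_id x).const_mul (-k)).exp)
      exact ((hd2 x (hmem x hx)).add ((hd1 x (hmem x hx)).const_mul k)).mul he
    have hmono_m : MonotoneOn m (Set.Ici r0) := by
      apply monotoneOn_of_deriv_nonneg (convex_Ici r0)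
      · intro x hx
        exact ((hderiv x (le_trans hr0 hx)).continuousAt).continuousWithinAt
      · intro x hx
        rw [interior_Ici] at hx
        exact (hderiv x (le_trans hr0 hx.le)).differentiableAt.differentiableWithinAt
      · intro x hx
        rw [interior_Ici] at hx
        have hx' : reps ≤ x := le_trans hr0 hx.le
        rw [(hderiv x hx').deriv]
        have h1 := hqpos x hx'
        have h2 := hpos x (hmem x hx')
        have h3 := Real.exp_pos (-k * x)
        have key : (q x * fh x + k * fd x) * Real.exp (-k * x)
            + (fd x + k * fh x) * (Real.exp (-k * x) * -k)
            = (q x - k ^ 2) * fh x * Real.exp (-k * x) := by ring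
        rw [key]
        exact mul_nonneg (mul_nonneg (by linarith) h2.le) h3.le
    have htend : Filter.Tendsto (fun r => m r0 * Real.exp (k * r))
        Filter.atTop Filter.atTop := by
      apply Filter.Tendsto.const_mul_atTop hm0
      exact Real.tendsto_exp_atTop.comp (Filter.Tendsto.const_mul_atTop hkpos Filter.tendsto_id)
    obtain ⟨r, hr1, hr2⟩ :=
      ((htend.eventually_gt_atTop (k * fh reps)).and (Filter.eventually_ge_atTop r0)).exists
    have hmr : m r0 ≤ m r := hmono_m Set.self_mem_Ici (Set.mem_Ici.mpr hr2) hr2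
    have hrreps : reps ≤ r := le_trans hr0 hr2
    have hwr : m r0 * Real.exp (k * r) ≤ fd r + k * fh r := by
      have h1 : m r0 * Real.exp (k * r) ≤ m r * Real.exp (k * r) :=
        mul_le_mul_of_nonneg_right hmr (Real.exp_pos _).le
      have h2 : m r * Real.exp (k * r) = fd r + k * fh r := by
        show (fd r + k * fh r) * Real.exp (-k * r) * Real.exp (k * r) = _
        rw [mul_assoc, ← Real.exp_add]
        ring_nf
        simp
      linarith
    have hfdr := hfd r hrreps
    have hfhr : fh r ≤ fh reps :=
      hanti_fh Set.self_mem_Ici (Set.mem_Ici.mpr hrreps) hrreps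
    nlinarith
  -- Step 3: fh r * exp (k r) is nonincreasing
  set F : ℝ → ℝ := fun r => fh r * Real.exp (k * r) with hF
  have hderivF : ∀ x, reps ≤ x →
      HasDerivAt F (fd x * Real.exp (k * x) + fh x * (Real.exp (k * x) * k)) x := by
    intro x hx
    have he : HasDerivAt (fun r => Real.exp (k * r)) (Real.exp (k * x) * k) x := by
      simpa using (((hasDerivAt_id x).const_mul k).exp)
    exact (hd1 x (hmem x hx)).mul he
  have hanti_F : AntitoneOn F (Set.Ici reps) := by
    apply antitoneOn_of_deriv_nonpos (convex_Ici reps)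
    · intro x hx
      exact ((hderivF x hx).continuousAt).continuousWithinAt
    · intro x hx
      rw [interior_Ici] at hx
      exact (hderivF x hx.le).differentiableAt.differentiableWithinAt
    · intro x hx
      rw [interior_Ici] at hx
      rw [(hderivF x hx.le).deriv]
      have h1 := hw x hx.le
      have h2 := Real.exp_pos (k * x)
      nlinarith
  refine ⟨fh reps * Real.exp (k * reps),
    mul_pos (hpos reps hreps) (Real.exp_pos _), ?_⟩
  intro r hr
  have hFr : F r ≤ F reps := hanti_F Set.self_mem_Ici (Set.mem_Ici.mpr hr) hr
  have hexp : Real.exp (-σ * (1 - ε) * r) = Real.exp (-(k * r)) := by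
    rw [hk]; ring_nf
  rw [hexp, Real.exp_neg, ← div_eq_mul_inv, le_div_iff₀ (Real.exp_pos _)]
  exact hFr
end

section
/- Let $e, g_\infty, m, h_1, h_2 > 0$ satisfy $0 < g_\infty < m$ and $h_1^2 < \frac{16}{3} h_2(m^2 - g_\infty^2)$. Let $f, g : (0,\infty) \to \mathbb{R}$ with $0 \leq g \leq g_\infty$ and define $\bar{g}(r) = g_\infty(1 - e^{-r})$. If $J_f(g) \leq J_f(\bar{g})$ where $J_f(g) = \frac{1}{2}\int_0^\infty \left(\frac{1}{e^2}(g')^2 + g^2 f^2\right) r^2\, dr$, then $I(f,g) \geq \frac{1}{2}\int_0^\infty \left((f')^2 + c f^2\right) r^2\, dr - \frac{g_\infty^2}{e^2}$, where $I(f,g) = K(f) - J_f(g)$, $K(f) = \frac{1}{2}\int_0^\infty \left((f')^2 + m^2 f^2 - \frac{h_1}{4} f^4 + \frac{h_2}{12} f^6\right) r^2\, dr$, and $c > 0$ depends only on $m, g_\infty, h_1, h_2$. -/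
/-!
Completing the square, `(h₂/12) x⁶ - (h₁/4) x⁴ + (3h₁²/(16h₂)) x² = x² (2h₂x² - 3h₁)² / (48h₂) ≥ 0`,
so the potential `m² f² - (h₁/4) f⁴ + (h₂/12) f⁶` dominates `(c + g∞²) f²` with
`c = m² - g∞² - 3h₁²/(16h₂)`, which is positive exactly under the hypothesis on `h₁²`.
By minimality `J_f(g) ≤ J_f(ḡ)`, and since `ḡ² ≤ g∞²` the comparison energy `J_f(ḡ)` is at most
`g∞² ∫ f² r² / 2` plus the exponential tail `(g∞²/(2e²)) ∫ r² e^{-2r} dr = g∞²/(8e²)`.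
The `g∞² f²` part of the potential absorbs the first term, leaving
`I(f,g) ≥ ½∫(f'² + c f²) r² - g∞²/(8e²)`.
-/

open MeasureTheory Set Real
open scoped Nat

lemma integrableOn_pow_mul_exp_neg_mul (n : ℕ) {b : ℝ} (hb : 0 < b) :
    IntegrableOn (fun r : ℝ => r ^ n * exp (-(b * r))) (Ioi 0) := by
  refine (integrableOn_rpow_mul_exp_neg_mul_rpow (s := n) (p := 1)
    (by linarith [(n.cast_nonneg : (0 : ℝ) ≤ n)]) one_pos hb).congr_fun (fun r _ => ?_)
    measurableSet_Ioi
  simp [rpow_natCast, neg_mul]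

lemma integral_pow_mul_exp_neg_mul (n : ℕ) {b : ℝ} (hb : 0 < b) :
    ∫ r in Ioi 0, r ^ n * exp (-(b * r)) = n ! / b ^ (n + 1) := by
  have := integral_rpow_mul_exp_neg_mul_Ioi (a := n + 1) (by positivity) hb
  rw [add_sub_cancel_right, Gamma_nat_eq_factorial, ← Nat.cast_add_one] at this
  simp only [rpow_natCast] at this
  rw [this, one_div_pow, one_div_mul_eq_div]

lemma exp_neg_sq (r : ℝ) : exp (-r) ^ 2 = exp (-(2 * r)) := by
  rw [← exp_nat_mul]
  ring_nf

lemma sq_one_sub_exp_neg_le_one {r : ℝ} (hr : 0 ≤ r) : (1 - exp (-r)) ^ 2 ≤ 1 := by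
  have hpos : 0 < exp (-r) := exp_pos _
  have hle : exp (-r) ≤ 1 := exp_le_one_iff.2 (neg_nonpos.2 hr)
  nlinarith

lemma quartic_le_quadratic_add_sextic (h1 : ℝ) {h2 : ℝ} (h2p : 0 < h2) (x : ℝ) :
    h1 / 4 * x ^ 4 ≤ 3 * h1 ^ 2 / (16 * h2) * x ^ 2 + h2 / 12 * x ^ 6 := by
  have hsquare : 3 * h1 ^ 2 / (16 * h2) * x ^ 2 + h2 / 12 * x ^ 6 - h1 / 4 * x ^ 4
      = x ^ 2 * (2 * h2 * x ^ 2 - 3 * h1) ^ 2 / (48 * h2) := by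
    field_simp
    ring
  have : 0 ≤ x ^ 2 * (2 * h2 * x ^ 2 - 3 * h1) ^ 2 / (48 * h2) := by positivity
  linarith

noncomputable def coercivityConst (m ginf h1 h2 : ℝ) : ℝ :=
  m ^ 2 - ginf ^ 2 - 3 * h1 ^ 2 / (16 * h2)

lemma coercivityConst_pos {m ginf h1 h2 : ℝ} (h2p : 0 < h2)
    (hcond : h1 ^ 2 < 16 / 3 * h2 * (m ^ 2 - ginf ^ 2)) : 0 < coercivityConst m ginf h1 h2 := by
  rw [coercivityConst, sub_pos, div_lt_iff₀ (by positivity)]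
  linarith

lemma coercivityConst_add_comparisonEnergy_density_le (e m ginf h1 : ℝ) {h2 r : ℝ} (h2p : 0 < h2)
    (hr : 0 ≤ r) (a : ℝ) :
    coercivityConst m ginf h1 h2 * a ^ 2 * r ^ 2
        + ((1 / e ^ 2) * (ginf * exp (-r)) ^ 2 + (ginf * (1 - exp (-r))) ^ 2 * a ^ 2) * r ^ 2
      ≤ (m ^ 2 * a ^ 2 - h1 / 4 * a ^ 4 + h2 / 12 * a ^ 6) * r ^ 2
        + ginf ^ 2 / e ^ 2 * (r ^ 2 * exp (-(2 * r))) := by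
  have hpotential := mul_le_mul_of_nonneg_right (quartic_le_quadratic_add_sextic h1 h2p a)
    (sq_nonneg r)
  have hgauge := mul_le_mul_of_nonneg_right (sq_one_sub_exp_neg_le_one hr)
    (by positivity : 0 ≤ ginf ^ 2 * a ^ 2 * r ^ 2)
  rw [coercivityConst, mul_pow ginf (exp (-r)), exp_neg_sq]
  linear_combination hpotential + hgauge

lemma integrableOn_comparisonEnergy_density (e ginf : ℝ) {f : ℝ → ℝ}
    (hf : IntegrableOn (fun r => f r ^ 2 * r ^ 2) (Ioi 0)) :
    IntegrableOn (fun r => ((1 / e ^ 2) * (ginf * exp (-r)) ^ 2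
      + (ginf * (1 - exp (-r))) ^ 2 * f r ^ 2) * r ^ 2) (Ioi 0) := by
  have hgauge : IntegrableOn (fun r => (ginf * (1 - exp (-r))) ^ 2 * (f r ^ 2 * r ^ 2))
      (Ioi 0) :=
    hf.bdd_mul (c := ginf ^ 2) (by fun_prop) <| ae_restrict_of_forall_mem measurableSet_Ioi
      fun r hr => by
        rw [norm_of_nonneg (sq_nonneg _), mul_pow]
        exact mul_le_of_le_one_right (sq_nonneg _) (sq_one_sub_exp_neg_le_one hr.le)
  refine IntegrableOn.congr_fun (((integrableOn_pow_mul_exp_neg_mul 2 two_pos).const_mul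
    (ginf ^ 2 / e ^ 2)).add hgauge) (fun r _ => ?_) measurableSet_Ioi
  rw [Pi.add_apply, mul_pow ginf (exp (-r)), exp_neg_sq]
  ring

lemma integrableOn_action_density (e m h1 h2 : ℝ) {f f' g g' : ℝ → ℝ}
    (hf' : IntegrableOn (fun r => f' r ^ 2 * r ^ 2) (Ioi 0))
    (hf2 : IntegrableOn (fun r => f r ^ 2 * r ^ 2) (Ioi 0))
    (hf4 : IntegrableOn (fun r => f r ^ 4 * r ^ 2) (Ioi 0))
    (hf6 : IntegrableOn (fun r => f r ^ 6 * r ^ 2) (Ioi 0))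
    (hg' : IntegrableOn (fun r => g' r ^ 2 * r ^ 2) (Ioi 0))
    (hgf : IntegrableOn (fun r => g r ^ 2 * f r ^ 2 * r ^ 2) (Ioi 0)) :
    IntegrableOn (fun r => (f' r ^ 2 - (1 / e ^ 2) * g' r ^ 2 - g r ^ 2 * f r ^ 2
      + m ^ 2 * f r ^ 2 - h1 / 4 * f r ^ 4 + h2 / 12 * f r ^ 6) * r ^ 2) (Ioi 0) := by
  refine IntegrableOn.congr_fun ((((hf'.sub (hg'.const_mul (1 / e ^ 2))).sub hgf).add
    (hf2.const_mul (m ^ 2)) |>.sub (hf4.const_mul (h1 / 4))).add (hf6.const_mul (h2 / 12)))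
    (fun r _ => ?_) measurableSet_Ioi
  simp only [Pi.add_apply, Pi.sub_apply]
  ring

lemma integrableOn_gaugeEnergy_density (e : ℝ) {f g g' : ℝ → ℝ}
    (hg' : IntegrableOn (fun r => g' r ^ 2 * r ^ 2) (Ioi 0))
    (hgf : IntegrableOn (fun r => g r ^ 2 * f r ^ 2 * r ^ 2) (Ioi 0)) :
    IntegrableOn (fun r => ((1 / e ^ 2) * g' r ^ 2 + g r ^ 2 * f r ^ 2) * r ^ 2) (Ioi 0) := by
  refine IntegrableOn.congr_fun ((hg'.const_mul (1 / e ^ 2)).add hgf) (fun r _ => ?_)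
    measurableSet_Ioi
  simp only [Pi.add_apply]
  ring

lemma integrableOn_sq_add_mul_sq_density (c : ℝ) {f f' : ℝ → ℝ}
    (hf' : IntegrableOn (fun r => f' r ^ 2 * r ^ 2) (Ioi 0))
    (hf2 : IntegrableOn (fun r => f r ^ 2 * r ^ 2) (Ioi 0)) :
    IntegrableOn (fun r => (f' r ^ 2 + c * f r ^ 2) * r ^ 2) (Ioi 0) := by
  refine IntegrableOn.congr_fun (hf'.add (hf2.const_mul c)) (fun r _ => ?_) measurableSet_Ioi
  simp only [Pi.add_apply]
  ring

theorem partial_coerciveness_general (e ginf m h1 h2 : ℝ)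
    (h2p : 0 < h2) (hcond : h1 ^ 2 < 16 / 3 * h2 * (m ^ 2 - ginf ^ 2)) :
    ∃ c > 0, ∀ f f' g g' : ℝ → ℝ,
      (∀ r > 0, 0 ≤ g r ∧ g r ≤ ginf) →
      IntegrableOn (fun r => (f' r) ^ 2 * r ^ 2) (Set.Ioi 0) →
      IntegrableOn (fun r => (f r) ^ 2 * r ^ 2) (Set.Ioi 0) →
      IntegrableOn (fun r => (f r) ^ 4 * r ^ 2) (Set.Ioi 0) →
      IntegrableOn (fun r => (f r) ^ 6 * r ^ 2) (Set.Ioi 0) →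
      IntegrableOn (fun r => (g' r) ^ 2 * r ^ 2) (Set.Ioi 0) →
      IntegrableOn (fun r => (g r) ^ 2 * (f r) ^ 2 * r ^ 2) (Set.Ioi 0) →
      -- J_f(g) ≤ J_f(ḡ) with ḡ(r) = ginf (1 - e^{-r})
      ((1 / 2) * ∫ r in Set.Ioi (0 : ℝ),
          ((1 / e ^ 2) * (g' r) ^ 2 + (g r) ^ 2 * (f r) ^ 2) * r ^ 2
        ≤ (1 / 2) * ∫ r in Set.Ioi (0 : ℝ),
          ((1 / e ^ 2) * (ginf * Real.exp (-r)) ^ 2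
            + (ginf * (1 - Real.exp (-r))) ^ 2 * (f r) ^ 2) * r ^ 2) →
      -- I(f,g) = K(f) - J_f(g) ≥ ½∫((f')² + c f²) r² dr - ginf²/e²
      (1 / 2) * ∫ r in Set.Ioi (0 : ℝ),
          ((f' r) ^ 2 - (1 / e ^ 2) * (g' r) ^ 2 - (g r) ^ 2 * (f r) ^ 2
            + m ^ 2 * (f r) ^ 2 - h1 / 4 * (f r) ^ 4 + h2 / 12 * (f r) ^ 6) * r ^ 2
        ≥ (1 / 2) * (∫ r in Set.Ioi (0 : ℝ), ((f' r) ^ 2 + c * (f r) ^ 2) * r ^ 2)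
          - ginf ^ 2 / e ^ 2 := by
  set c := coercivityConst m ginf h1 h2
  refine ⟨c, coercivityConst_pos h2p hcond, fun f f' g g' _ hf' hf2 hf4 hf6 hg' hgf hJ => ?_⟩
  set tail : ℝ → ℝ := fun r => ginf ^ 2 / e ^ 2 * (r ^ 2 * exp (-(2 * r)))
  have htail : IntegrableOn tail (Ioi 0) :=
    (integrableOn_pow_mul_exp_neg_mul 2 two_pos).const_mul _
  have htail_eq : ∫ r in Ioi 0, tail r = ginf ^ 2 / e ^ 2 / 4 := by
    rw [integral_const_mul, integral_pow_mul_exp_neg_mul 2 two_pos]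
    norm_num
    ring
  have hD := integrableOn_sq_add_mul_sq_density c hf' hf2
  have hI := integrableOn_action_density e m h1 h2 hf' hf2 hf4 hf6 hg' hgf
  have hJ_int := integrableOn_gaugeEnergy_density e hg' hgf
  have hJbar_int := integrableOn_comparisonEnergy_density e ginf hf2
  have hmono := setIntegral_mono_on (hD.add hJbar_int) ((hI.add hJ_int).add htail)
    measurableSet_Ioi fun r hr => by
      have := coercivityConst_add_comparisonEnergy_density_le e m ginf h1 h2p hr.le (f r)
      simp only [Pi.add_apply, tail]
      linarith
  rw [integral_add' hD hJbar_int, integral_add' (hI.add hJ_int) htail, integral_add' hI hJ_int,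
    htail_eq] at hmono
  have htail_nonneg : 0 ≤ ginf ^ 2 / e ^ 2 := by positivity
  linarith

theorem partial_coerciveness (e ginf m h1 h2 : ℝ)
    (he : 0 < e) (hg : 0 < ginf) (hm : 0 < m) (h1p : 0 < h1) (h2p : 0 < h2)
    (hgm : ginf < m) (hcond : h1 ^ 2 < 16 / 3 * h2 * (m ^ 2 - ginf ^ 2)) :
    ∃ c > 0, ∀ f f' g g' : ℝ → ℝ,
      (∀ r > 0, 0 ≤ g r ∧ g r ≤ ginf) →
      IntegrableOn (fun r => (f' r) ^ 2 * r ^ 2) (Set.Ioi 0) →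
      IntegrableOn (fun r => (f r) ^ 2 * r ^ 2) (Set.Ioi 0) →
      IntegrableOn (fun r => (f r) ^ 4 * r ^ 2) (Set.Ioi 0) →
      IntegrableOn (fun r => (f r) ^ 6 * r ^ 2) (Set.Ioi 0) →
      IntegrableOn (fun r => (g' r) ^ 2 * r ^ 2) (Set.Ioi 0) →
      IntegrableOn (fun r => (g r) ^ 2 * (f r) ^ 2 * r ^ 2) (Set.Ioi 0) →
      -- J_f(g) ≤ J_f(ḡ) with ḡ(r) = ginf (1 - e^{-r})
      ((1 / 2) * ∫ r in Set.Ioi (0 : ℝ),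
          ((1 / e ^ 2) * (g' r) ^ 2 + (g r) ^ 2 * (f r) ^ 2) * r ^ 2
        ≤ (1 / 2) * ∫ r in Set.Ioi (0 : ℝ),
          ((1 / e ^ 2) * (ginf * Real.exp (-r)) ^ 2
            + (ginf * (1 - Real.exp (-r))) ^ 2 * (f r) ^ 2) * r ^ 2) →
      -- I(f,g) = K(f) - J_f(g) ≥ ½∫((f')² + c f²) r² dr - ginf²/e²
      (1 / 2) * ∫ r in Set.Ioi (0 : ℝ),
          ((f' r) ^ 2 - (1 / e ^ 2) * (g' r) ^ 2 - (g r) ^ 2 * (f r) ^ 2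
            + m ^ 2 * (f r) ^ 2 - h1 / 4 * (f r) ^ 4 + h2 / 12 * (f r) ^ 6) * r ^ 2
        ≥ (1 / 2) * (∫ r in Set.Ioi (0 : ℝ), ((f' r) ^ 2 + c * (f r) ^ 2) * r ^ 2)
          - ginf ^ 2 / e ^ 2 :=
  partial_coerciveness_general e ginf m h1 h2 h2p hcond
end

section
/- Let $h_0, e, g_1 > 0$ and let $g : (0,\infty) \to \mathbb{R}$ be $C^2$ with $g(1) \geq g_1 > 0$, $g' \geq 0$, and $(r^2 g')' = e^2 g(r) h_0^2 r^2$ on $(1, R)$. Then for $1 < r < R$, $g'(r) \geq c_1 r + c_2/r^2$ where $c_1 = \frac{e^2 h_0^2 g_1}{3}$ and $c_2 = g'(1) - c_1$, and consequently $\int_1^R (g')^2 r^2\, dr \geq \frac{c_1^2}{5} R^5 + O(R^2)$ as $R \to \infty$. -/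
/-!
With `c = e²h₀²g₁/3`, the equation `(r²g')' = e²h₀²g r²` and `g ≥ g₁` make `r²g'(r) - c r³`
nondecreasing on `[1, ∞)`, which is the pointwise bound `r²g' ≥ c r³ + (g'(1) - c)`. Squaring
it, with `r²g' ≥ 0` and `c r³ ≥ 0`, gives `g'² r² ≥ c² r⁴ + 2c(g'(1) - c) r`, whose integral
over `[1, R]` is `c²R⁵/5 + O(R²)`.
-/

open Set Filter Topology MeasureTheory intervalIntegral

theorem le_of_hasDerivAt_of_forall_Ioo_le {f f' : ℝ → ℝ} {a b M : ℝ} (hab : a < b)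
    (hf : ∀ x ∈ Ico a b, HasDerivAt f (f' x) x) (hle : ∀ x ∈ Ioo a b, f' x ≤ M) :
    f' a ≤ M := by
  have hslope : Tendsto (slope f a) (𝓝[>] a) (𝓝 (f' a)) :=
    (hasDerivAt_iff_tendsto_slope.mp (hf a ⟨le_rfl, hab⟩)).mono_left
      (nhdsWithin_mono _ fun x hx => ne_of_gt hx)
  refine le_of_tendsto hslope (eventually_of_mem (Ioo_mem_nhdsGT hab) fun t ht => ?_)
  obtain ⟨ξ, hξ, hξeq⟩ := exists_hasDerivAt_eq_slope f f' ht.1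
    (fun x hx => (hf x ⟨hx.1, hx.2.trans_lt ht.2⟩).continuousAt.continuousWithinAt)
    (fun x hx => hf x ⟨hx.1.le, hx.2.trans ht.2⟩)
  rw [slope_def_field, ← hξeq]
  exact hle ξ ⟨hξ.1, hξ.2.trans ht.2⟩

theorem le_of_hasDerivAt_of_forall_Ioo_le_of_continuousWithinAt {f f' φ : ℝ → ℝ} {a b : ℝ}
    (hab : a < b) (hf : ∀ x ∈ Ico a b, HasDerivAt f (f' x) x)
    (hφ : ContinuousWithinAt φ (Ioi a) a) (hle : ∀ x ∈ Ioo a b, f' x ≤ φ x) :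
    f' a ≤ φ a := by
  refine le_of_forall_gt_imp_ge_of_dense fun M hM => ?_
  obtain ⟨u, hau, hu⟩ := (mem_nhdsGT_iff_exists_Ioo_subset' hab).mp
    (hφ.eventually (gt_mem_nhds hM))
  refine le_of_hasDerivAt_of_forall_Ioo_le (lt_min hau hab)
    (fun x hx => hf x ⟨hx.1, hx.2.trans_le (min_le_right _ _)⟩) fun x hx => ?_
  exact (hle x ⟨hx.1, hx.2.trans_le (min_le_right _ _)⟩).trans
    (hu ⟨hx.1, hx.2.trans_le (min_le_left _ _)⟩).le

theorem MonotoneOn.Ici_of_Ioi {f : ℝ → ℝ} {a : ℝ} (hf : MonotoneOn f (Ioi a))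
    (ha : ∀ x ∈ Ioi a, f a ≤ f x) : MonotoneOn f (Ici a) := by
  intro x hx y hy hxy
  rcases (mem_Ici.mp hx).eq_or_lt with rfl | hx
  · rcases (mem_Ici.mp hy).eq_or_lt with rfl | hy
    · rfl
    · exact ha y hy
  · exact hf hx (hx.trans_le hxy) hxy

theorem monotoneOn_sq_mul_sub_mul_cube {g g' F' : ℝ → ℝ} {c : ℝ}
    (hg' : ∀ r ∈ Ici (1 : ℝ), 0 ≤ g' r) (hg : ∀ r ∈ Ici (1 : ℝ), HasDerivAt g (g' r) r)
    (hF : ∀ r ∈ Ioi (1 : ℝ), HasDerivAt (fun s => s ^ 2 * g' s) (F' r) r)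
    (hF' : ∀ r ∈ Ioi (1 : ℝ), 3 * c * r ^ 2 ≤ F' r) :
    MonotoneOn (fun s => s ^ 2 * g' s - c * s ^ 3) (Ici 1) := by
  set G := fun s => s ^ 2 * g' s - c * s ^ 3
  have hG : ∀ r ∈ Ioi (1 : ℝ), HasDerivAt G (F' r - c * (3 * r ^ 2)) r := fun r hr =>
    (hF r hr).sub (by simpa using (hasDerivAt_pow 3 r).const_mul c)
  have hIoi : MonotoneOn G (Ioi 1) := by
    refine monotoneOn_of_hasDerivWithinAt_nonneg (convex_Ioi 1)
      (f' := fun r => F' r - c * (3 * r ^ 2))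
      (fun x hx => (hG x hx).continuousAt.continuousWithinAt) ?_ ?_ <;> rw [interior_Ioi]
    · exact fun x hx => (hG x hx).hasDerivWithinAt
    · intro x hx
      linarith [hF' x hx]
  refine hIoi.Ici_of_Ioi fun r hr => ?_
  -- `g' 1` is the derivative of `g`, not a limit of `g'`: pass to it through slopes of `g`.
  have hg'1 := le_of_hasDerivAt_of_forall_Ioo_le_of_continuousWithinAt
    (φ := fun x => G r + c * x ^ 3) hr (fun x hx => hg x hx.1) (by fun_prop) fun x hx => ?_
  · simp only [G] at hg'1 ⊢
    linarith
  · calc g' x ≤ x ^ 2 * g' x := le_mul_of_one_le_left (hg' x hx.1.le) (one_le_pow₀ hx.1.le)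
      _ = G x + c * x ^ 3 := by simp only [G]; ring
      _ ≤ G r + c * x ^ 3 := by gcongr; exact hIoi hx.1 hr hx.2.le

theorem sq_add_two_mul_le_sq_of_add_le {u v w : ℝ} (hu : 0 ≤ u) (hv : 0 ≤ v) (h : v + w ≤ u) :
    v ^ 2 + 2 * w * v ≤ u ^ 2 := by
  rcases le_or_gt 0 (v + w) with hvw | hvw
  · nlinarith [mul_le_mul h h hvw hu, sq_nonneg w]
  · nlinarith [sq_nonneg u, mul_nonneg hv (show 0 ≤ -(v + w) by linarith)]

theorem add_le_sq_mul_of_monotoneOn {g' : ℝ → ℝ} {c : ℝ}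
    (hG : MonotoneOn (fun s => s ^ 2 * g' s - c * s ^ 3) (Ici 1)) {r : ℝ} (hr : 1 ≤ r) :
    c * r ^ 3 + (g' 1 - c) ≤ r ^ 2 * g' r := by
  have := hG self_mem_Ici hr hr
  simp only [one_pow, one_mul, mul_one] at this
  linarith

theorem mul_pow_four_add_le_sq_mul_sq {g' : ℝ → ℝ} {c : ℝ} (hc : 0 ≤ c)
    (hg' : ∀ r ∈ Ici (1 : ℝ), 0 ≤ g' r)
    (hG : MonotoneOn (fun s => s ^ 2 * g' s - c * s ^ 3) (Ici 1)) {r : ℝ} (hr : 1 ≤ r) :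
    c ^ 2 * r ^ 4 + 2 * c * (g' 1 - c) * r ≤ g' r ^ 2 * r ^ 2 := by
  have hsq := sq_add_two_mul_le_sq_of_add_le (mul_nonneg (sq_nonneg r) (hg' r hr))
    (by positivity) (add_le_sq_mul_of_monotoneOn hG hr)
  refine le_of_mul_le_mul_right ?_ (by positivity : (0 : ℝ) < r ^ 2)
  linear_combination hsq

theorem intervalIntegrable_sq_mul_sq {g' : ℝ → ℝ} {a b : ℝ} (ha : 0 < a) (hab : a ≤ b)
    (hg' : ∀ r ∈ Icc a b, 0 ≤ g' r) (hu : MonotoneOn (fun s => s ^ 2 * g' s) (Icc a b)) :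
    IntervalIntegrable (fun r => g' r ^ 2 * r ^ 2) volume a b := by
  have hsq : MonotoneOn (fun s => (s ^ 2 * g' s) ^ 2) (uIcc a b) := by
    rw [uIcc_of_le hab]
    exact fun x hx y hy hxy =>
      pow_le_pow_left₀ (mul_nonneg (sq_nonneg x) (hg' x hx)) (hu hx hy hxy) 2
  have hinv : ContinuousOn (fun r : ℝ => (r ^ 2)⁻¹) (uIcc a b) := by
    refine ContinuousOn.inv₀ (by fun_prop) fun x hx => ?_
    rw [uIcc_of_le hab] at hx
    exact pow_ne_zero 2 (ha.trans_le hx.1).ne'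
  refine (intervalIntegrable_congr fun x hx => ?_).mp
    (hsq.intervalIntegrable.mul_continuousOn hinv)
  rw [uIoc_of_le hab] at hx
  have hx0 : x ≠ 0 := (ha.trans hx.1).ne'
  field_simp

theorem integral_sq_mul_sq_ge {g' : ℝ → ℝ} {c : ℝ} (hc : 0 ≤ c)
    (hg' : ∀ r ∈ Ici (1 : ℝ), 0 ≤ g' r)
    (hG : MonotoneOn (fun s => s ^ 2 * g' s - c * s ^ 3) (Ici 1)) {R : ℝ} (hR : 1 ≤ R) :
    c ^ 2 / 5 * R ^ 5 - (c ^ 2 / 5 + |c * (g' 1 - c)|) * R ^ 2 ≤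
      ∫ r in (1 : ℝ)..R, g' r ^ 2 * r ^ 2 := by
  set w := g' 1 - c
  have hu : MonotoneOn (fun s => s ^ 2 * g' s) (Icc 1 R) := by
    intro x hx y hy hxy
    have hcube : c * x ^ 3 ≤ c * y ^ 3 :=
      mul_le_mul_of_nonneg_left (pow_le_pow_left₀ (by linarith [hx.1]) hxy 3) hc
    linarith [hG hx.1 hy.1 hxy]
  have hpoly : ∫ r in (1 : ℝ)..R, (c ^ 2 * r ^ 4 + 2 * c * w * r) =
      c ^ 2 * ((R ^ 5 - 1) / 5) + c * w * (R ^ 2 - 1) := by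
    rw [integral_add (Continuous.intervalIntegrable (by fun_prop) _ _)
      (Continuous.intervalIntegrable (by fun_prop) _ _), intervalIntegral.integral_const_mul,
      intervalIntegral.integral_const_mul, integral_pow, integral_id]
    ring
  have hR2 : (1 : ℝ) ≤ R ^ 2 := one_le_pow₀ hR
  calc c ^ 2 / 5 * R ^ 5 - (c ^ 2 / 5 + |c * w|) * R ^ 2
      ≤ c ^ 2 * ((R ^ 5 - 1) / 5) + c * w * (R ^ 2 - 1) := by
        nlinarith [neg_abs_le (c * w), abs_nonneg (c * w), sq_nonneg c]
    _ = ∫ r in (1 : ℝ)..R, (c ^ 2 * r ^ 4 + 2 * c * w * r) := hpoly.symm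
    _ ≤ ∫ r in (1 : ℝ)..R, g' r ^ 2 * r ^ 2 :=
      integral_mono_on hR (Continuous.intervalIntegrable (by fun_prop) _ _)
        (intervalIntegrable_sq_mul_sq one_pos hR (fun r hr => hg' r hr.1) hu)
        fun r hr => mul_pow_four_add_le_sq_mul_sq hc hg' hG hr.1

theorem gauge_energy_lower_bound_general (e h0 g1 : ℝ)
    (hg1 : 0 < g1)
    (g g' : ℝ → ℝ)
    (hg1' : g1 ≤ g 1)
    (hmono : ∀ r ∈ Set.Ici (1 : ℝ), 0 ≤ g' r)
    (hd1 : ∀ r ∈ Set.Ici (1 : ℝ), HasDerivAt g (g' r) r)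
    (hdiv : ∀ r ∈ Set.Ioi (1 : ℝ),
      HasDerivAt (fun s => s ^ 2 * g' s) (e ^ 2 * g r * h0 ^ 2 * r ^ 2) r) :
    (∀ r > 1, g' r ≥ e ^ 2 * h0 ^ 2 * g1 / 3 * r
      + (g' 1 - e ^ 2 * h0 ^ 2 * g1 / 3) / r ^ 2) ∧
    ∃ C : ℝ, ∀ R > 1, ∫ r in (1 : ℝ)..R, (g' r) ^ 2 * r ^ 2
      ≥ (e ^ 2 * h0 ^ 2 * g1 / 3) ^ 2 / 5 * R ^ 5 - C * R ^ 2 := by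
  set c := e ^ 2 * h0 ^ 2 * g1 / 3
  have hg : MonotoneOn g (Ici 1) :=
    monotoneOn_of_hasDerivWithinAt_nonneg (convex_Ici 1)
      (fun x hx => (hd1 x hx).continuousAt.continuousWithinAt)
      (fun x hx => (hd1 x (interior_subset hx)).hasDerivWithinAt)
      fun x hx => hmono x (interior_subset hx)
  have hG : MonotoneOn (fun s => s ^ 2 * g' s - c * s ^ 3) (Ici 1) := by
    refine monotoneOn_sq_mul_sub_mul_cube hmono hd1 hdiv fun r hr => ?_
    have hgr : g1 ≤ g r := hg1'.trans (hg self_mem_Ici (mem_Ici.mpr hr.le) hr.le)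
    calc 3 * c * r ^ 2 = e ^ 2 * h0 ^ 2 * r ^ 2 * g1 := by ring
      _ ≤ e ^ 2 * h0 ^ 2 * r ^ 2 * g r := by gcongr
      _ = e ^ 2 * g r * h0 ^ 2 * r ^ 2 := by ring
  refine ⟨fun r hr => ?_, _, fun R hR =>
    integral_sq_mul_sq_ge (by positivity) hmono hG hR.le⟩
  have hr2 : (0 : ℝ) < r ^ 2 := by positivity
  rw [ge_iff_le, show c * r + (g' 1 - c) / r ^ 2 = (c * r ^ 3 + (g' 1 - c)) / r ^ 2 by
    field_simp, div_le_iff₀ hr2]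
  linarith [add_le_sq_mul_of_monotoneOn hG hr.le]

theorem gauge_energy_lower_bound (e h0 g1 : ℝ)
    (he : 0 < e) (hh0 : 0 < h0) (hg1 : 0 < g1)
    (g g' : ℝ → ℝ)
    (hg1' : g1 ≤ g 1)
    (hmono : ∀ r ∈ Set.Ici (1 : ℝ), 0 ≤ g' r)
    (hd1 : ∀ r ∈ Set.Ici (1 : ℝ), HasDerivAt g (g' r) r)
    (hdiv : ∀ r ∈ Set.Ioi (1 : ℝ),
      HasDerivAt (fun s => s ^ 2 * g' s) (e ^ 2 * g r * h0 ^ 2 * r ^ 2) r) :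
    (∀ r > 1, g' r ≥ e ^ 2 * h0 ^ 2 * g1 / 3 * r
      + (g' 1 - e ^ 2 * h0 ^ 2 * g1 / 3) / r ^ 2) ∧
    ∃ C : ℝ, ∀ R > 1, ∫ r in (1 : ℝ)..R, (g' r) ^ 2 * r ^ 2
      ≥ (e ^ 2 * h0 ^ 2 * g1 / 3) ^ 2 / 5 * R ^ 5 - C * R ^ 2 :=
  gauge_energy_lower_bound_general e h0 g1 hg1 g g' hg1' hmono hd1 hdiv
end
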